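/- Let A ∈ ℝ^{m×n}, x̂ > 0, σ̂ > 0, with all rows of A nonzero, and set γ = min_{1≤i≤m} σ̂_i/‖a_i‖₁. Suppose min_i x̂_i ≥ γ. Then any (y, c, ε, ε^σ) with ε ≥ 0, ε^σ ≥ 0 satisfying (A^T y)_j + ε_j/x̂_j = c_j for all j, y_i + ε^σ_i/σ̂_i = 0 for all i, and ‖c‖₁ = 1, has objective Σ_j ε_j + Σ_i ε^σ_i ≥ γ. -/

import Mathlib

/-!
Dual feasibility forces `ε_j = x̂_j (c_j - (Aᵀy)_j) ≥ γ |c_j - (Aᵀy)_j|` and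
`ε^σ_i = σ̂_i |y_i| ≥ γ ‖a_i‖₁ |y_i|`. Summing, and bounding `Σ_j |(Aᵀy)_j|` by
`Σ_i ‖a_i‖₁ |y_i|`, the objective dominates `γ Σ_j (|c_j - (Aᵀy)_j| + |(Aᵀy)_j|) ≥ γ ‖c‖₁ = γ`.
-/

open Matrix

theorem Matrix.sum_abs_transpose_mulVec_le {ι κ : Type*} [Fintype ι] [Fintype κ]
    (A : Matrix ι κ ℝ) (y : ι → ℝ) :
    ∑ j, |Aᵀ.mulVec y j| ≤ ∑ i, (∑ j, |A i j|) * |y i| :=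
  calc ∑ j, |Aᵀ.mulVec y j| = ∑ j, |∑ i, A i j * y i| := by
        simp only [mulVec, dotProduct, transpose_apply]
    _ ≤ ∑ j, ∑ i, |A i j| * |y i| := by
        gcongr with j
        simpa only [abs_mul] using Finset.abs_sum_le_sum_abs (fun i ↦ A i j * y i) _
    _ = ∑ i, (∑ j, |A i j|) * |y i| := by
        rw [Finset.sum_comm]
        simp only [Finset.sum_mul]

theorem mul_le_of_isLeast_div {ι : Type*} {σ S : ι → ℝ} {γ : ℝ}
    (hγ : IsLeast {v | ∃ i, v = σ i / S i} γ) (hσ : ∀ i, 0 ≤ σ i) (hS : ∀ i, 0 ≤ S i) (i : ι) :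
    γ * S i ≤ σ i := by
  rcases (hS i).eq_or_lt with hSi | hSi
  · simp [← hSi, hσ i]
  · exact (le_div_iff₀ hSi).mp (hγ.2 ⟨i, rfl⟩)

theorem mul_abs_sub_le_of_add_div_eq {γ x t c ε : ℝ} (hγ : 0 ≤ γ) (hγx : γ ≤ x) (hε : 0 ≤ ε)
    (h : t + ε / x = c) : γ * |c - t| ≤ ε := by
  have hx : 0 ≤ x := hγ.trans hγx
  rw [show c - t = ε / x by linarith, abs_of_nonneg (div_nonneg hε hx)]
  rcases hx.eq_or_lt with rfl | hx
  · simpa using hε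
  · calc γ * (ε / x) ≤ x * (ε / x) := by gcongr
      _ = ε := mul_div_cancel₀ ε hx.ne'

theorem eq_mul_abs_of_add_div_eq_zero {y s ε : ℝ} (hs : 0 < s) (hε : 0 ≤ ε)
    (h : y + ε / s = 0) : ε = s * |y| := by
  rw [show y = -(ε / s) by linarith, abs_neg, abs_of_nonneg (div_nonneg hε hs.le),
    mul_div_cancel₀ ε hs.ne']

theorem stmt_12_general (m n : ℕ) (A : Matrix (Fin m) (Fin n) ℝ)
    (xhat : Fin n → ℝ)
    (σhat : Fin m → ℝ) (hσ : ∀ i, 0 < σhat i)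
    (γ : ℝ) (hγ : IsLeast {v : ℝ | ∃ i, v = σhat i / ∑ j, |A i j|} γ)
    (hcase : ∀ j, γ ≤ xhat j)
    (y : Fin m → ℝ) (c ε : Fin n → ℝ) (εσ : Fin m → ℝ)
    (hε : ∀ j, 0 ≤ ε j) (hεσ : ∀ i, 0 ≤ εσ i)
    (h1 : ∀ j, Aᵀ.mulVec y j + ε j / xhat j = c j)
    (h2 : ∀ i, y i + εσ i / σhat i = 0)
    (hnorm : ∑ j, |c j| = 1) :
    γ ≤ ∑ j, ε j + ∑ i, εσ i := by
  set T := Aᵀ.mulVec y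
  have hS : ∀ i, 0 ≤ ∑ j, |A i j| := fun i ↦ Finset.sum_nonneg fun j _ ↦ abs_nonneg (A i j)
  have hγ0 : 0 ≤ γ := by
    obtain ⟨i, rfl⟩ := hγ.1
    exact div_nonneg (hσ i).le (hS i)
  have hεσ_ge : ∀ i, γ * ((∑ j, |A i j|) * |y i|) ≤ εσ i := fun i ↦ by
    rw [eq_mul_abs_of_add_div_eq_zero (hσ i) (hεσ i) (h2 i), ← mul_assoc]
    exact mul_le_mul_of_nonneg_right
      (mul_le_of_isLeast_div hγ (fun i ↦ (hσ i).le) hS i) (abs_nonneg _)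
  calc γ = γ * ∑ j, |c j| := by rw [hnorm, mul_one]
    _ ≤ γ * ∑ j, (|c j - T j| + |T j|) := by
        gcongr with j
        simpa using abs_add_le (c j - T j) (T j)
    _ = ∑ j, γ * |c j - T j| + γ * ∑ j, |T j| := by
        rw [Finset.sum_add_distrib, mul_add, Finset.mul_sum]
    _ ≤ ∑ j, ε j + γ * ∑ i, (∑ j, |A i j|) * |y i| := by
        gcongr with j
        · exact mul_abs_sub_le_of_add_div_eq hγ0 (hcase j) (hε j) (h1 j)
        · exact A.sum_abs_transpose_mulVec_le y
    _ ≤ ∑ j, ε j + ∑ i, εσ i := by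
        rw [Finset.mul_sum]
        gcongr with i
        exact hεσ_ge i

/-- Lower-bound half of Proposition 4(b): with γ = min_i σ̂_i/‖a_i‖₁ and
min_j x̂_j ≥ γ, every feasible solution of [IOP2(x̂, σ̂)] has objective at least γ. -/
theorem stmt_12 (m n : ℕ) (A : Matrix (Fin m) (Fin n) ℝ) (hrows : ∀ i, ∑ j, |A i j| ≠ 0)
    (xhat : Fin n → ℝ) (hx : ∀ j, 0 < xhat j)
    (σhat : Fin m → ℝ) (hσ : ∀ i, 0 < σhat i)
    (γ : ℝ) (hγ : IsLeast {v : ℝ | ∃ i, v = σhat i / ∑ j, |A i j|} γ)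
    (hcase : ∀ j, γ ≤ xhat j)
    (y : Fin m → ℝ) (c ε : Fin n → ℝ) (εσ : Fin m → ℝ)
    (hε : ∀ j, 0 ≤ ε j) (hεσ : ∀ i, 0 ≤ εσ i)
    (h1 : ∀ j, Aᵀ.mulVec y j + ε j / xhat j = c j)
    (h2 : ∀ i, y i + εσ i / σhat i = 0)
    (hnorm : ∑ j, |c j| = 1) :
    γ ≤ ∑ j, ε j + ∑ i, εσ i :=
  stmt_12_general m n A xhat σhat hσ γ hγ hcase y c ε εσ hε hεσ h1 h2 hnorm
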